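/- arXiv:1106.4712 — 5 statements merged into one kernel-verified Lean document; each statement's English description precedes it below -/
import Mathlib

section
/- Let L ≥ 2. Suppose D and E are linear operators on a complex vector space V, φ : V → ℂ is a linear functional, and v₂ ∈ V, satisfying q·E·D − p·D·E = D + E, φ∘(α·E − γ·D + id) = 0, and (β·D − δ·E + id)v₂ = 0. Define Φ ∈ (ℂ²)^{⊗L} by its components on the occupation basis: ⟨τ₁…τ_L|Φ⟩ := φ((τ₁D + (1−τ₁)E)(τ₂D + (1−τ₂)E)⋯(τ_LD + (1−τ_L)E) v₂) for (τ₁,…,τ_L) ∈ {0,1}^L, the product taken in order of increasing site index. Then W Φ = 0, where W is the ASEP Markov matrix with s = 0. -/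
/-! Write `X₀ = E`, `X₁ = D` and let the hat operators be the scalars `X̂₀ = -1`, `X̂₁ = 1`.
The three hypotheses say exactly that `∑ w(a b; σ) X_σ₁ X_σ₂ = X̂_a X_b - X_a X̂_b` in the bulk,
`φ ∘ ∑ K̂(a; σ) X_σ = -X̂_a φ` at the left end and `∑ K(a; σ) X_σ v₂ = X̂_a v₂` at the right end.
Hence, writing `g j` for the amplitude with `X̂` in place of the `j`-th factor, the local terms of
`W` map the matrix product state to `-g 1`, `g L` and `g j - g (j+1)`, which telescope to zero. -/

open scoped BigOperators

noncomputable section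

/-- The bulk matrix `w` of the open ASEP, with rows/columns indexed by
`(τ, τ') ∈ Fin 2 × Fin 2` in the order `(0,0), (0,1), (1,0), (1,1)`. -/
def wB (p q : ℂ) : Fin 2 × Fin 2 → Fin 2 × Fin 2 → ℂ := fun r c =>
  if r = (0, 1) ∧ c = (0, 1) then -q
  else if r = (0, 1) ∧ c = (1, 0) then p
  else if r = (1, 0) ∧ c = (0, 1) then q
  else if r = (1, 0) ∧ c = (1, 0) then -p
  else 0

/-- The right boundary matrix `K = [[−δ, β], [δ, −β]]`. -/
def KB (β δ : ℂ) : Fin 2 → Fin 2 → ℂ := fun i j =>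
  if i = 0 then (if j = 0 then -δ else β) else (if j = 0 then δ else -β)

/-- The left boundary matrix `K̂ = [[−α, γe^{−s}], [αe^s, −γ]]`. -/
def KhatB (α γ s : ℂ) : Fin 2 → Fin 2 → ℂ := fun i j =>
  if i = 0 then (if j = 0 then -α else γ * Complex.exp (-s))
  else (if j = 0 then α * Complex.exp s else -γ)

/-- Action of a one-site matrix `M` on the tensor leg `i` of `(ℂ²)^{⊗L}`,
the latter identified with maps `(Fin L → Fin 2) → ℂ`. -/
def siteAct {L : ℕ} (M : Fin 2 → Fin 2 → ℂ) (i : Fin L) (Φ : (Fin L → Fin 2) → ℂ) :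
    (Fin L → Fin 2) → ℂ :=
  fun τ => ∑ σ : Fin 2, M (τ i) σ * Φ (Function.update τ i σ)

/-- Action of a two-site matrix `M` on the tensor legs `i, j` of `(ℂ²)^{⊗L}`. -/
def bondAct {L : ℕ} (M : Fin 2 × Fin 2 → Fin 2 × Fin 2 → ℂ) (i j : Fin L)
    (Φ : (Fin L → Fin 2) → ℂ) : (Fin L → Fin 2) → ℂ :=
  fun τ => ∑ σ : Fin 2 × Fin 2,
    M (τ i, τ j) σ * Φ (Function.update (Function.update τ i σ.1) j σ.2)

/-- The ASEP Markov matrix `W = K̂₁ + K_L + Σ_{j=1}^{L−1} w_{j,j+1}`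
acting on `(ℂ²)^{⊗L}`. -/
def Wop (p q α β γ δ s : ℂ) (L : ℕ) (hL : 0 < L)
    (Φ : (Fin L → Fin 2) → ℂ) : (Fin L → Fin 2) → ℂ :=
  siteAct (KhatB α γ s) ⟨0, hL⟩ Φ + siteAct (KB β δ) ⟨L - 1, by omega⟩ Φ +
    ∑ j : Fin (L - 1),
      bondAct (wB p q) ⟨j.1, by have := j.2; omega⟩ ⟨j.1 + 1, by have := j.2; omega⟩ Φ

namespace List

theorem ofFn_update {α : Type*} {n : ℕ} (f : Fin n → α) (i : Fin n) (x : α) :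
    ofFn (Function.update f i x) = (ofFn f).set i x := by
  refine ext_getElem (by simp) fun k hk _ => ?_
  simp [getElem_set, Function.update_apply, Fin.ext_iff, eq_comm]

variable {M : Type*} [Monoid M]

theorem prod_set_of_lt {l : List M} {i : ℕ} (hi : i < l.length) (x : M) :
    (l.set i x).prod = (l.take i).prod * x * (l.drop (i + 1)).prod := by
  simp [prod_set, hi]

theorem prod_set_set :
    ∀ {l : List M} {i : ℕ}, i + 1 < l.length → ∀ x y : M,
      ((l.set i x).set (i + 1) y).prod = (l.take i).prod * (x * y) * (l.drop (i + 2)).prod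
  | _ :: _ :: _, 0, _, _, _ => by simp [mul_assoc]
  | _ :: _, i + 1, hi, x, y => by
    simp [prod_set_set (by simpa using hi), mul_assoc]

theorem prod_eraseIdx (l : List M) (i : ℕ) :
    (l.eraseIdx i).prod = (l.take i).prod * (l.drop (i + 1)).prod := by
  rw [eraseIdx_eq_take_drop_succ, prod_append]

end List

section MatrixProduct

variable {V : Type*} [AddCommGroup V] [Module ℂ V]
  {φ : V →ₗ[ℂ] ℂ} {m : Fin 2 → Module.End ℂ V} {v : V} {L : ℕ}

variable (φ m v) in
def amplitude (τ : Fin L → Fin 2) : ℂ := φ ((List.ofFn (m ∘ τ)).prod v)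

def hatSign (σ : Fin 2) : ℂ := if σ = 1 then 1 else -1

variable (φ m v) in
/-- Indexed by `ℕ`, and `0` off the lattice, so that the bond terms telescope in a `range` sum. -/
def hatAmplitude (τ : Fin L → Fin 2) (j : ℕ) : ℂ :=
  if h : j < L then hatSign (τ ⟨j, h⟩) * φ (((List.ofFn (m ∘ τ)).eraseIdx j).prod v) else 0

theorem siteAct_amplitude (M : Fin 2 → Fin 2 → ℂ) (i : Fin L) (τ : Fin L → Fin 2) :
    siteAct M i (amplitude φ m v) τ =
      φ (((List.ofFn (m ∘ τ)).take i).prod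
        ((∑ σ, M (τ i) σ • m σ) (((List.ofFn (m ∘ τ)).drop (i + 1)).prod v))) := by
  have hi : (i : ℕ) < (List.ofFn (m ∘ τ)).length := by simp
  simp [siteAct, amplitude, Function.comp_update, List.ofFn_update, List.prod_set_of_lt hi,
    Module.End.mul_apply]

theorem bondAct_amplitude (M : Fin 2 × Fin 2 → Fin 2 × Fin 2 → ℂ) {i j : Fin L}
    (hij : j.1 = i.1 + 1) (τ : Fin L → Fin 2) :
    bondAct M i j (amplitude φ m v) τ =
      φ (((List.ofFn (m ∘ τ)).take i).prod
        ((∑ σ, M (τ i, τ j) σ • (m σ.1 * m σ.2)) (((List.ofFn (m ∘ τ)).drop (i + 2)).prod v))) := by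
  have hj : (i : ℕ) + 1 < (List.ofFn (m ∘ τ)).length := by simp [← hij]
  simp [bondAct, amplitude, Function.comp_update, List.ofFn_update, hij, List.prod_set_set hj,
    Module.End.mul_apply]

theorem siteAct_first_amplitude {M : Fin 2 → Fin 2 → ℂ}
    (hM : ∀ a x, φ ((∑ σ, M a σ • m σ) x) = -hatSign a * φ x) (hL : 0 < L)
    (τ : Fin L → Fin 2) :
    siteAct M ⟨0, hL⟩ (amplitude φ m v) τ = -hatAmplitude φ m v τ 0 := by
  rw [siteAct_amplitude, Fin.val_mk, List.take_zero, List.prod_nil, Module.End.one_apply, hM]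
  simp [hatAmplitude, hL]

theorem siteAct_last_amplitude {M : Fin 2 → Fin 2 → ℂ}
    (hM : ∀ a, (∑ σ, M a σ • m σ) v = hatSign a • v) (hL : 0 < L) (τ : Fin L → Fin 2) :
    siteAct M ⟨L - 1, by omega⟩ (amplitude φ m v) τ = hatAmplitude φ m v τ (L - 1) := by
  have hdrop : (List.ofFn (m ∘ τ)).drop L = [] := List.drop_of_length_le (by simp)
  rw [siteAct_amplitude, Nat.sub_add_cancel hL, hdrop, List.prod_nil, Module.End.one_apply, hM]
  simp [hatAmplitude, hL, List.prod_eraseIdx, Nat.sub_add_cancel hL, hdrop]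

theorem bondAct_amplitude_eq_sub {M : Fin 2 × Fin 2 → Fin 2 × Fin 2 → ℂ}
    (hM : ∀ a b, ∑ σ, M (a, b) σ • (m σ.1 * m σ.2) = hatSign a • m b - hatSign b • m a)
    (j : ℕ) (hj : j + 1 < L) (τ : Fin L → Fin 2) :
    bondAct M ⟨j, by omega⟩ ⟨j + 1, hj⟩ (amplitude φ m v) τ =
      hatAmplitude φ m v τ j - hatAmplitude φ m v τ (j + 1) := by
  have hl : j + 1 < (List.ofFn (m ∘ τ)).length := by simpa using hj
  rw [bondAct_amplitude M rfl, hM]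
  simp [hatAmplitude, hj, Nat.lt_of_succ_lt hj, List.prod_eraseIdx,
    List.drop_eq_getElem_cons hl, List.prod_take_succ _ _ (Nat.lt_of_succ_lt hl),
    Module.End.mul_apply]

end MatrixProduct

section Relations

variable {V : Type*} [AddCommGroup V] [Module ℂ V] {D E : Module.End ℂ V}

def ansatzOp (D E : Module.End ℂ V) (σ : Fin 2) : Module.End ℂ V := if σ = 1 then D else E

theorem sum_wB_smul_ansatzOp {p q : ℂ} (hbulk : q • (E * D) - p • (D * E) = D + E)
    (a b : Fin 2) :
    ∑ σ, wB p q (a, b) σ • (ansatzOp D E σ.1 * ansatzOp D E σ.2) =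
      hatSign a • ansatzOp D E b - hatSign b • ansatzOp D E a := by
  simp only [Fintype.sum_prod_type, Fin.sum_univ_two]
  fin_cases a <;> fin_cases b <;> simp [wB, hatSign, ansatzOp]
  · linear_combination (norm := module) -hbulk
  · linear_combination (norm := module) hbulk

theorem apply_sum_KhatB_smul_ansatzOp {φ : V →ₗ[ℂ] ℂ} {α γ : ℂ}
    (hleft : φ ∘ₗ (α • E - γ • D + 1) = 0) (a : Fin 2) (x : V) :
    φ ((∑ σ, KhatB α γ 0 a σ • ansatzOp D E σ) x) = -hatSign a * φ x := by
  have h := LinearMap.congr_fun hleft x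
  simp only [LinearMap.comp_apply, LinearMap.add_apply, LinearMap.sub_apply,
    LinearMap.smul_apply, map_add, map_sub, map_smul, Module.End.one_apply, smul_eq_mul,
    LinearMap.zero_apply] at h
  fin_cases a <;> simp [KhatB, hatSign, ansatzOp]
  · linear_combination -h
  · linear_combination h

theorem sum_KB_smul_ansatzOp_apply {v : V} {β δ : ℂ} (hright : (β • D - δ • E + 1) v = 0)
    (a : Fin 2) :
    (∑ σ, KB β δ a σ • ansatzOp D E σ) v = hatSign a • v := by
  simp only [LinearMap.add_apply, LinearMap.sub_apply, LinearMap.smul_apply,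
    Module.End.one_apply] at hright
  fin_cases a <;> simp [KB, hatSign, ansatzOp]
  · linear_combination (norm := module) hright
  · linear_combination (norm := module) -hright

end Relations

/-- The matrix-Ansatz (DEHP) steady state: if `D, E, φ, v₂` satisfy
`qED − pDE = D + E`, `φ ∘ (αE − γD + id) = 0` and `(βD − δE + id)v₂ = 0`, then the vector
`Φ` with components `⟨τ|Φ⟩ = φ((τ₁D + (1−τ₁)E)⋯(τ_LD + (1−τ_L)E) v₂)` satisfies `WΦ = 0`
for the ASEP Markov matrix `W` with `s = 0`. -/
theorem statement0 (p q α β γ δ : ℂ)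
    (L : ℕ) (hL : 2 ≤ L)
    {V : Type*} [AddCommGroup V] [Module ℂ V]
    (D E : Module.End ℂ V) (φ : V →ₗ[ℂ] ℂ) (v₂ : V)
    (hbulk : q • (E * D) - p • (D * E) = D + E)
    (hleft : φ ∘ₗ (α • E - γ • D + 1) = 0)
    (hright : (β • D - δ • E + 1) v₂ = 0)
    (Φ : (Fin L → Fin 2) → ℂ)
    (hΦ : ∀ τ : Fin L → Fin 2,
      Φ τ = φ ((List.ofFn fun i : Fin L => if τ i = 1 then D else E).prod v₂)) :
    Wop p q α β γ δ 0 L (by omega) Φ = 0 := by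
  obtain rfl : Φ = amplitude φ (ansatzOp D E) v₂ := funext hΦ
  funext τ
  set g := hatAmplitude φ (ansatzOp D E) v₂ τ
  have hfirst :=
    siteAct_first_amplitude (v := v₂) (apply_sum_KhatB_smul_ansatzOp hleft) (by omega) τ
  have hlast := siteAct_last_amplitude (φ := φ) (sum_KB_smul_ansatzOp_apply hright) (by omega) τ
  have hbonds : ∀ j : Fin (L - 1), bondAct (wB p q) ⟨j, by omega⟩ ⟨j + 1, by omega⟩
      (amplitude φ (ansatzOp D E) v₂) τ = g j - g (j + 1) := fun j =>
    bondAct_amplitude_eq_sub (sum_wB_smul_ansatzOp hbulk) j (by omega) τ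
  simp only [Wop, Pi.add_apply, Finset.sum_apply, Pi.zero_apply, hbonds, hfirst, hlast]
  rw [Fin.sum_univ_eq_sum_range (fun j => g j - g (j + 1)), Finset.sum_range_sub']
  ring
end
end

section
/- Let D, E be linear operators on a complex vector space V satisfying q·E·D − p·D·E = D + E. Then for every v ∈ ℂ, w(|ω(v)⟩⊗|ω(vq/p)⟩) = |ω(v)⟩⊗|t̄(vq/p)⟩ − |t̄(v)⟩⊗|ω(vq/p)⟩, as an identity of 4-tuples of operators on V. -/
open scoped BigOperators

noncomputable section

/-- `[u] = (1 − u)/(q − p)`. -/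
def br (p q u : ℂ) : ℂ := (1 - u) / (q - p)

/-- The operator pair `|ω(u)⟩ = (E − [u]·id, u·D + [u]·id)`. -/
def omegaPair {V : Type*} [AddCommGroup V] [Module ℂ V]
    (p q : ℂ) (D E : Module.End ℂ V) (u : ℂ) : Fin 2 → Module.End ℂ V :=
  fun i => if i = 0 then E - br p q u • 1 else u • D + br p q u • 1

/-- The operator pair `|t(u)⟩ = (u·id, −id)`. -/
def tPair {V : Type*} [AddCommGroup V] [Module ℂ V] (u : ℂ) :
    Fin 2 → Module.End ℂ V :=
  fun i => if i = 0 then u • 1 else -1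

/-- The operator pair `|t̄(u)⟩ = (0, (p−q)(u·D + [u]·id))`. -/
def tbarPair {V : Type*} [AddCommGroup V] [Module ℂ V]
    (p q : ℂ) (D : Module.End ℂ V) (u : ℂ) : Fin 2 → Module.End ℂ V :=
  fun i => if i = 0 then 0 else (p - q) • (u • D + br p q u • 1)

/-- Tensor product of two operator pairs, `(a,b)⊗(a′,b′) = (aa′, ab′, ba′, bb′)`,
with noncommutative ordered products. -/
def tensP {V : Type*} [AddCommGroup V] [Module ℂ V]
    (x y : Fin 2 → Module.End ℂ V) : Fin 2 × Fin 2 → Module.End ℂ V :=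
  fun rc => x rc.1 * y rc.2

/-- Action of the `4×4` scalar matrix `w` on a 4-tuple of operators. -/
def wAct {V : Type*} [AddCommGroup V] [Module ℂ V]
    (p q : ℂ) (X : Fin 2 × Fin 2 → Module.End ℂ V) : Fin 2 × Fin 2 → Module.End ℂ V :=
  fun r => ∑ c : Fin 2 × Fin 2, wB p q r c • X c

/-! Both sides vanish in the entries `(0,0)` and `(1,1)`, the latter because
`t̄(u)₁ = (p − q) ω(u)₁`. In the entries `(0,1)` and `(1,0)` the identity reduces to the exchange
relation `ω(v)₁ ω(v′)₀ = ω(v)₀ ω(v′)₁` for `p v′ = q v`: multiplied by `p`, the difference of its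
sides is `v (D + E − (qED − pDE))`, since `p([v] − [v′]) = p(v′[v] − v[v′]) = v`. -/

theorem mul_exchange_of_bulk {A : Type*} [Ring A] [Algebra ℂ A] {p q : ℂ} (hp : p ≠ 0)
    (hpq : p ≠ q) {D E : A} (hbulk : q • (E * D) - p • (D * E) = D + E) {u u' : ℂ}
    (hu : p * u' = q * u) :
    (u • D + br p q u • 1) * (E - br p q u' • 1) =
      (E - br p q u • 1) * (u' • D + br p q u' • 1) := by
  have hcommutator : p • ((u • D + br p q u • 1) * (E - br p q u' • 1) -
      (E - br p q u • 1) * (u' • D + br p q u' • 1)) =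
      u • (D + E - (q • (E * D) - p • (D * E))) := by
    obtain rfl : u' = q * u / p := by rw [← hu]; field_simp
    have hqp : q - p ≠ 0 := sub_ne_zero.mpr hpq.symm
    simp only [br, add_mul, mul_add, sub_mul, mul_sub, smul_mul_assoc, mul_smul_comm, smul_smul,
      mul_one, one_mul, smul_sub, smul_add]
    match_scalars <;> field_simp <;> ring
  rwa [hbulk, sub_self, smul_zero, (IsUnit.mk0 p hp).smul_eq_zero, sub_eq_zero] at hcommutator

@[simp]
theorem tbarPair_zero {V : Type*} [AddCommGroup V] [Module ℂ V] (p q : ℂ) (D : Module.End ℂ V)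
    (u : ℂ) : tbarPair p q D u 0 = 0 := rfl

theorem tbarPair_one {V : Type*} [AddCommGroup V] [Module ℂ V] (p q : ℂ) (D E : Module.End ℂ V)
    (u : ℂ) : tbarPair p q D u 1 = (p - q) • omegaPair p q D E u 1 := rfl

theorem statement2_general (p q : ℂ) (hp : p ≠ 0) (hpq : p ≠ q)
    {V : Type*} [AddCommGroup V] [Module ℂ V]
    (D E : Module.End ℂ V)
    (hbulk : q • (E * D) - p • (D * E) = D + E) (v : ℂ) :
    wAct p q (tensP (omegaPair p q D E v) (omegaPair p q D E (v * q / p))) =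
      tensP (omegaPair p q D E v) (tbarPair p q D (v * q / p)) -
        tensP (tbarPair p q D v) (omegaPair p q D E (v * q / p)) := by
  have hexch : omegaPair p q D E v 1 * omegaPair p q D E (v * q / p) 0 =
      omegaPair p q D E v 0 * omegaPair p q D E (v * q / p) 1 :=
    mul_exchange_of_bulk hp hpq hbulk (by field_simp)
  funext r
  fin_cases r <;>
    simp only [wAct, wB, tensP, Pi.sub_apply, Fintype.sum_prod_type, Fin.sum_univ_two, Fin.isValue,
      Fin.zero_eta, Fin.mk_one, Prod.mk.injEq, zero_ne_one, one_ne_zero, true_and, false_and,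
      and_true, and_false, and_self, ↓reduceIte, ite_smul, zero_smul, tbarPair_zero,
      tbarPair_one (E := E), hexch, mul_zero, zero_mul, mul_smul_comm, smul_mul_assoc] <;>
    module

/-- If `qED − pDE = D + E` then
`w(|ω(v)⟩⊗|ω(vq/p)⟩) = |ω(v)⟩⊗|t̄(vq/p)⟩ − |t̄(v)⟩⊗|ω(vq/p)⟩`. -/
theorem statement2 (p q : ℂ) (hp : p ≠ 0) (hq : q ≠ 0) (hpq : p ≠ q)
    {V : Type*} [AddCommGroup V] [Module ℂ V]
    (D E : Module.End ℂ V)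
    (hbulk : q • (E * D) - p • (D * E) = D + E) (v : ℂ) :
    wAct p q (tensP (omegaPair p q D E v) (omegaPair p q D E (v * q / p))) =
      tensP (omegaPair p q D E v) (tbarPair p q D (v * q / p)) -
        tensP (tbarPair p q D v) (omegaPair p q D E (v * q / p)) :=
  statement2_general p q hp hpq D E hbulk v
end
end

section
/- Let D, E be linear operators on a complex vector space V satisfying q·E·D − p·D·E = D + E. Then for all u, v ∈ ℂ, w(|ω(v)⟩⊗|ω(uq/p)⟩) = −q·|ω(v)⟩⊗|ω(uq/p)⟩ + q·|ω(u)⟩⊗|ω(v)⟩ + |ω(v)⟩⊗|t(uq/p)⟩ − |t̄(v)⟩⊗|ω(uq/p)⟩, as an identity of 4-tuples of operators on V. -/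
open scoped BigOperators

noncomputable section

/-! Compare the four components. The diagonal ones involve only `E`, resp. only `D`, and vanish
by the scalar identities `q([u] - [uq/p]) = uq/p` and `q[u] - p[uq/p] = 1`. Each off-diagonal
one uses the bulk relation once to trade `ED` for `DE`; the remaining scalars then match by
these identities and `(q - p)[v] = 1 - v`. -/

section Bracket

variable {p q : ℂ}

lemma sub_mul_br (hpq : p ≠ q) (u : ℂ) : (q - p) * br p q u = 1 - u :=
  mul_div_cancel₀ _ (sub_ne_zero.mpr hpq.symm)

lemma mul_br_sub_mul_br_div (hp : p ≠ 0) (hpq : p ≠ q) (u : ℂ) :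
    q * br p q u - p * br p q (u * q / p) = 1 := by
  have hqp : q - p ≠ 0 := sub_ne_zero.mpr hpq.symm
  unfold br
  field_simp
  ring

lemma mul_br_sub_br_div (hp : p ≠ 0) (hpq : p ≠ q) (u : ℂ) :
    q * (br p q u - br p q (u * q / p)) = u * q / p := by
  have hqp : q - p ≠ 0 := sub_ne_zero.mpr hpq.symm
  unfold br
  field_simp
  ring

end Bracket

section WAct

variable {V : Type*} [AddCommGroup V] [Module ℂ V] (p q : ℂ) (X : Fin 2 × Fin 2 → Module.End ℂ V)

lemma wAct_apply_zero_zero : wAct p q X (0, 0) = 0 := by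
  simp [wAct, wB]

lemma wAct_apply_zero_one : wAct p q X (0, 1) = -q • X (0, 1) + p • X (1, 0) := by
  simp [wAct, wB, Fintype.sum_prod_type]

lemma wAct_apply_one_zero : wAct p q X (1, 0) = q • X (0, 1) - p • X (1, 0) := by
  simp [wAct, wB, Fintype.sum_prod_type, sub_eq_add_neg]

lemma wAct_apply_one_one : wAct p q X (1, 1) = 0 := by
  simp [wAct, wB]

end WAct

theorem statement4_general (p q : ℂ) (hp : p ≠ 0) (hpq : p ≠ q)
    {V : Type*} [AddCommGroup V] [Module ℂ V]
    (D E : Module.End ℂ V)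
    (hbulk : q • (E * D) - p • (D * E) = D + E) (u v : ℂ) :
    wAct p q (tensP (omegaPair p q D E v) (omegaPair p q D E (u * q / p))) =
      (-q) • tensP (omegaPair p q D E v) (omegaPair p q D E (u * q / p)) +
        q • tensP (omegaPair p q D E u) (omegaPair p q D E v) +
        tensP (omegaPair p q D E v) (tPair (u * q / p)) -
        tensP (tbarPair p q D v) (omegaPair p q D E (u * q / p)) := by
  have hw : p * (u * q / p) = q * u := by field_simp
  have hbrv := sub_mul_br hpq v
  have hshift := mul_br_sub_mul_br_div hp hpq u
  have hdiff := mul_br_sub_br_div hp hpq u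
  generalize u * q / p = w at *
  simp only [funext_iff, Prod.forall, Fin.forall_fin_two, wAct_apply_zero_zero, wAct_apply_zero_one,
    wAct_apply_one_zero, wAct_apply_one_one, Pi.add_apply, Pi.sub_apply, Pi.smul_apply, tensP,
    omegaPair, tPair, tbarPair, Fin.isValue, if_true, one_ne_zero, if_false]
  generalize br p q v = a at *
  generalize br p q w = b at *
  generalize br p q u = c at *
  refine ⟨⟨?_, ?_⟩, ?_, ?_⟩ <;>
    simp only [mul_add, add_mul, mul_sub, sub_mul, smul_mul_assoc, mul_smul_comm, one_mul, mul_one,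
      zero_mul, mul_neg]
  · linear_combination (norm := module) hdiff • E - hdiff • (a • (1 : Module.End ℂ V))
  · linear_combination (norm := module)
      (-v) • hbulk + hshift • (v • D) - hbrv • E + hshift • (a • (1 : Module.End ℂ V))
  · linear_combination (norm := module) w • hbulk + hw • (D * E) - hbrv • (w • D) - hw • (a • D) -
      hdiff • E + hdiff • (a • (1 : Module.End ℂ V))
  · linear_combination (norm := module)
      hw • (v • (D * D)) - hshift • (v • D) + hw • (a • D) - hshift • (a • (1 : Module.End ℂ V))

/-- If `qED − pDE = D + E` then
`w(|ω(v)⟩⊗|ω(uq/p)⟩) = −q·|ω(v)⟩⊗|ω(uq/p)⟩ + q·|ω(u)⟩⊗|ω(v)⟩ + |ω(v)⟩⊗|t(uq/p)⟩ − |t̄(v)⟩⊗|ω(uq/p)⟩`. -/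
theorem statement4 (p q : ℂ) (hp : p ≠ 0) (hq : q ≠ 0) (hpq : p ≠ q)
    {V : Type*} [AddCommGroup V] [Module ℂ V]
    (D E : Module.End ℂ V)
    (hbulk : q • (E * D) - p • (D * E) = D + E) (u v : ℂ) :
    wAct p q (tensP (omegaPair p q D E v) (omegaPair p q D E (u * q / p))) =
      (-q) • tensP (omegaPair p q D E v) (omegaPair p q D E (u * q / p)) +
        q • tensP (omegaPair p q D E u) (omegaPair p q D E v) +
        tensP (omegaPair p q D E v) (tPair (u * q / p)) -
        tensP (tbarPair p q D v) (omegaPair p q D E (u * q / p)) :=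
  statement4_general p q hp hpq D E hbulk u v
end
end

section
/- Let D, E be linear operators on a complex vector space V and v₂ ∈ V with (β·D − δ·E + id)v₂ = 0, and let ε ∈ {+,−}. Set u := −1/c_{−ε}(β,δ) (so u = 1 for ε = +, and u = −β/δ for ε = −, assuming δ ≠ 0 in the latter case). Then K(|ω(u)⟩v₂) = λ_ε(β,δ)·(|ω(u)⟩v₂) − |t(u)⟩v₂, as an identity of pairs of vectors in V, where |ω(u)⟩v₂ denotes the pair obtained by applying each operator entry of |ω(u)⟩ to v₂. -/
open scoped BigOperators

noncomputable section

/-- Componentwise action of a `2×2` scalar matrix on a pair of elements of a `ℂ`-module. -/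
def mat2VecAct {V : Type*} [AddCommGroup V] [Module ℂ V]
    (M : Fin 2 → Fin 2 → ℂ) (x : Fin 2 → V) : Fin 2 → V :=
  fun i => ∑ j : Fin 2, M i j • x j

/-- `c₊(x,y) = y/x` and `c₋(x,y) = −1`; the sign `+` is encoded as `true`. -/
def ccB (e : Bool) (x y : ℂ) : ℂ := if e then y / x else -1

/-- `λ₊(x,y) = 0` and `λ₋(x,y) = −x−y`; the sign `+` is encoded as `true`. -/
def lamB (e : Bool) (x y : ℂ) : ℂ := if e then 0 else -x - y

section RightBoundary

variable {V : Type*} [AddCommGroup V] [Module ℂ V] (p q β δ : ℂ) (D E : Module.End ℂ V) (v : V)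

theorem br_one : br p q 1 = 0 := by
  rw [br, sub_self, zero_div]

theorem omegaPair_zero_apply (u : ℂ) : omegaPair p q D E u 0 v = E v - br p q u • v := rfl

theorem omegaPair_one_apply (u : ℂ) : omegaPair p q D E u 1 v = u • D v + br p q u • v := rfl

theorem tPair_zero_apply (u : ℂ) : tPair u 0 v = u • v := rfl

theorem tPair_one_apply (u : ℂ) : tPair u 1 v = -v := rfl

theorem mat2VecAct_KB_zero (x : Fin 2 → V) : mat2VecAct (KB β δ) x 0 = -δ • x 0 + β • x 1 := by
  simp [mat2VecAct, KB]

theorem mat2VecAct_KB_one (x : Fin 2 → V) : mat2VecAct (KB β δ) x 1 = δ • x 0 - β • x 1 := by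
  simp [mat2VecAct, KB, sub_eq_add_neg]

variable {β δ D E v}

theorem right_boundary_apply (hright : (β • D - δ • E + 1) v = 0) :
    β • D v - δ • E v + v = 0 := by
  simpa only [LinearMap.add_apply, LinearMap.sub_apply, LinearMap.smul_apply,
    Module.End.one_apply] using hright

theorem KB_omegaPair_one (hright : (β • D - δ • E + 1) v = 0) :
    mat2VecAct (KB β δ) (fun i => omegaPair p q D E 1 i v) = fun i => -tPair 1 i v := by
  have hv := right_boundary_apply hright
  refine funext (Fin.forall_fin_two.mpr ⟨?_, ?_⟩) <;>
    simp only [mat2VecAct_KB_zero, mat2VecAct_KB_one, omegaPair_zero_apply, omegaPair_one_apply,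
      tPair_zero_apply, tPair_one_apply, br_one, zero_smul, sub_zero, add_zero]
  · linear_combination (norm := module) hv
  · linear_combination (norm := module) -hv

-- The `[u]`-part `[u]·(−v, v)` of `|ω(u)⟩v` is an eigenvector of `K` for `λ₋ = −β − δ`.
theorem KB_omegaPair_of_mul_eq {u : ℂ} (hu : δ * u = -β) (hright : (β • D - δ • E + 1) v = 0) :
    mat2VecAct (KB β δ) (fun i => omegaPair p q D E u i v) =
      fun i => (-β - δ) • omegaPair p q D E u i v - tPair u i v := by
  have hv := right_boundary_apply hright
  refine funext (Fin.forall_fin_two.mpr ⟨?_, ?_⟩) <;>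
    simp only [mat2VecAct_KB_zero, mat2VecAct_KB_one, omegaPair_zero_apply, omegaPair_one_apply,
      tPair_zero_apply, tPair_one_apply]
  · linear_combination (norm := module) u • hv + hu • E v
  · linear_combination (norm := module) -hv + hu • D v

end RightBoundary

theorem statement5_general (p q β δ : ℂ)
    {V : Type*} [AddCommGroup V] [Module ℂ V]
    (D E : Module.End ℂ V) (v₂ : V)
    (hright : (β • D - δ • E + 1) v₂ = 0)
    (ε : Bool) (hδ : ε = false → δ ≠ 0)
    (u : ℂ) (hu : u = -1 / ccB (!ε) β δ) :
    mat2VecAct (KB β δ) (fun i => omegaPair p q D E u i v₂) =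
      fun i => lamB ε β δ • omegaPair p q D E u i v₂ - tPair u i v₂ := by
  cases ε with
  | false =>
    have hδu : δ * u = -β := by
      rw [hu, ccB, Bool.not_false, if_pos rfl, neg_div, one_div_div, mul_neg,
        mul_div_cancel₀ _ (hδ rfl)]
    exact KB_omegaPair_of_mul_eq p q hδu hright
  | true =>
    obtain rfl : u = 1 := by norm_num [hu, ccB]
    rw [KB_omegaPair_one p q hright]
    funext i
    rw [lamB, if_pos rfl, zero_smul, zero_sub]

/-- With `(βD − δE + id)v₂ = 0` and `u = −1/c_{−ε}(β,δ)`, one has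
`K(|ω(u)⟩v₂) = λ_ε(β,δ)·(|ω(u)⟩v₂) − |t(u)⟩v₂`. -/
theorem statement5 (p q β δ : ℂ) (hp : p ≠ 0) (hq : q ≠ 0) (hpq : p ≠ q)
    {V : Type*} [AddCommGroup V] [Module ℂ V]
    (D E : Module.End ℂ V) (v₂ : V)
    (hright : (β • D - δ • E + 1) v₂ = 0)
    (ε : Bool) (hδ : ε = false → δ ≠ 0)
    (u : ℂ) (hu : u = -1 / ccB (!ε) β δ) :
    mat2VecAct (KB β δ) (fun i => omegaPair p q D E u i v₂) =
      fun i => lamB ε β δ • omegaPair p q D E u i v₂ - tPair u i v₂ :=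
  statement5_general p q β δ D E v₂ hright ε hδ u hu
end
end

section
/- Let R be a (possibly noncommutative) ring that is an algebra over ℂ (or any commutative ring containing p and q), and let D, E ∈ R satisfy q·E·D − p·D·E = D + E. Then for every integer n ≥ 1, qⁿ·E·Dⁿ = (1 + pD)ⁿ·E + Σ_{ℓ=1}^{n} q^{ℓ−1}·(1 + pD)^{n−ℓ}·D^ℓ. -/
/-!
With `A = 1 + p D` the relation reads `E (qD) = A E + D`: moving `E` rightwards past one
factor `qD` multiplies it on the left by `A` and leaves the error term `D`. Iterating
gives `E (qD)ⁿ = Aⁿ E + Σ_{i<n} A^{n-1-i} D (qD)^i`, which is the claimed identity after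
pulling out the scalars and shifting the summation index.
-/

open Finset

theorem mul_pow_eq_pow_mul_add_sum_of_mul_eq {M : Type*} [Semiring M] {a b c x : M}
    (h : x * a = b * x + c) (n : ℕ) :
    x * a ^ n = b ^ n * x + ∑ i ∈ range n, b ^ (n - 1 - i) * c * a ^ i := by
  induction n with
  | zero => simp
  | succ n ih =>
    rw [pow_succ', ← mul_assoc, h, add_mul, mul_assoc, ih, mul_add, ← mul_assoc, ← pow_succ',
      add_assoc, sum_range_succ, Nat.add_sub_cancel, Nat.sub_self, pow_zero, one_mul, mul_sum]
    congr 2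
    refine sum_congr rfl fun i hi => ?_
    have := mem_range.mp hi
    rw [← mul_assoc, ← mul_assoc, ← pow_succ']
    congr 3
    omega

theorem statement11_general {S : Type*} [CommRing S] (p q : S)
    {R : Type*} [Ring R] [Algebra S R] (D E : R)
    (hbulk : q • (E * D) - p • (D * E) = D + E)
    (n : ℕ) :
    q ^ n • (E * D ^ n) =
      (1 + p • D) ^ n * E +
        ∑ ℓ ∈ Finset.Icc 1 n, q ^ (ℓ - 1) • ((1 + p • D) ^ (n - ℓ) * D ^ ℓ) := by
  have hrel : E * (q • D) = (1 + p • D) * E + D := by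
    rw [mul_smul_comm, sub_eq_iff_eq_add.mp hbulk, add_mul, one_mul, smul_mul_assoc]
    abel
  -- `i + 1 - 1` so that the right side is the summand of the goal at `ℓ = i + 1`.
  have hterm : ∀ i ∈ range n, (1 + p • D) ^ (n - 1 - i) * D * (q • D) ^ i =
      q ^ (i + 1 - 1) • ((1 + p • D) ^ (n - (i + 1)) * D ^ (i + 1)) := fun i _ => by
    rw [Nat.add_sub_cancel, smul_pow, mul_smul_comm, mul_assoc, ← pow_succ', Nat.sub_sub,
      add_comm 1 i]
  calc q ^ n • (E * D ^ n) = E * (q • D) ^ n := by rw [smul_pow, mul_smul_comm]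
    _ = (1 + p • D) ^ n * E + ∑ i ∈ range n, (1 + p • D) ^ (n - 1 - i) * D * (q • D) ^ i :=
      mul_pow_eq_pow_mul_add_sum_of_mul_eq hrel n
    _ = _ := by
      rw [sum_congr rfl hterm, range_eq_Ico,
        sum_Ico_add' (fun ℓ => q ^ (ℓ - 1) • ((1 + p • D) ^ (n - ℓ) * D ^ ℓ)), zero_add,
        Ico_add_one_right_eq_Icc]

/-- If `qED − pDE = D + E` in an algebra `R` over a commutative ring
containing `p` and `q`, then for every `n ≥ 1`,
`qⁿ·E·Dⁿ = (1 + pD)ⁿ·E + Σ_{ℓ=1}^{n} q^{ℓ−1}·(1 + pD)^{n−ℓ}·D^ℓ`. -/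
theorem statement11 {S : Type*} [CommRing S] (p q : S)
    {R : Type*} [Ring R] [Algebra S R] (D E : R)
    (hbulk : q • (E * D) - p • (D * E) = D + E)
    (n : ℕ) (hn : 1 ≤ n) :
    q ^ n • (E * D ^ n) =
      (1 + p • D) ^ n * E +
        ∑ ℓ ∈ Finset.Icc 1 n, q ^ (ℓ - 1) • ((1 + p • D) ^ (n - ℓ) * D ^ ℓ) :=
  statement11_general p q D E hbulk n
end
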